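/- arXiv:2507.06604 — 2 statements merged into one kernel-verified Lean document; each statement's English description precedes it below -/
import Mathlib

section
/- The matrix a₂₂ is invertible with a₂₂⁻¹ = ψ₁⁻¹·(1ₙ − ψ₁⁻¹·z·z*), and the Schur complement satisfies a₁₁ − a₁₂·a₂₂⁻¹·a₂₁ = ψ₂·1ₙ + ξᵀ·(ξ̄ − s̄·ψ₁⁻¹·zᵀ) + z̄·(m·zᵀ − s·ψ₁⁻¹·ξ̄), where m = ψ₁⁻²·(|s|² − ψ₁ψ₂). -/
/-! a₂₂ is ψ₁ times a rank-one perturbation of the identity, inverted by the Sherman–Morrison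
formula. All remaining blocks are combinations of rank-one matrices, and
`vecMulVec u v * vecMulVec w x = (v ⬝ᵥ w) • vecMulVec u x` turns the Schur complement into
scalar identities in the dot products, which are fixed by `z* z = ψ₁ - 1`, `ξ z = s - s_xz`
and `ξ ξ* = ψ₂ - |s_xz|²`. -/

open Matrix

section
variable {ι K : Type*} [Fintype ι] [DecidableEq ι] [Field K]

theorem Matrix.smul_one_add_vecMulVec_mul_eq_one {c : K} (u v : ι → K) (hc : c ≠ 0)
    (huv : v ⬝ᵥ u = c - 1) :
    c • (1 + vecMulVec u v) * (c⁻¹ • (1 - c⁻¹ • vecMulVec u v)) = 1 := by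
  simp only [add_mul, mul_sub, one_mul, mul_one, Matrix.mul_smul, Matrix.smul_mul,
    vecMulVec_mul_vecMulVec, vecMulVec_smul, smul_smul, huv]
  match_scalars
  · field_simp
  · field_simp
    ring

variable [StarRing K]

theorem schurComplement_eq_of_dotProduct (z ξ : ι → K) (s σ ψ₁ ψ₂ : K) (hψ₁ : ψ₁ ≠ 0)
    (hz : star z ⬝ᵥ z = ψ₁ - 1) (hξz : ξ ⬝ᵥ z = s - σ) (hξ : ξ ⬝ᵥ star ξ = ψ₂ - σ * star σ) :
    ψ₂ • 1 - σ • vecMulVec (star z) (star ξ) - star σ • vecMulVec ξ z + ψ₁ • vecMulVec ξ (star ξ)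
      - (ψ₁ • vecMulVec ξ (star z) + vecMulVec (star z) ξ - σ • vecMulVec (star z) (star z))
        * (ψ₁⁻¹ • (1 - ψ₁⁻¹ • vecMulVec z (star z)))
        * (ψ₁ • vecMulVec z (star ξ) + vecMulVec (star ξ) z - star σ • vecMulVec z z)
    = ψ₂ • 1 + vecMulVec ξ (star ξ - (star s * ψ₁⁻¹) • z)
        + vecMulVec (star z) ((ψ₁⁻¹ ^ 2 * (s * star s - ψ₁ * ψ₂)) • z - (s * ψ₁⁻¹) • star ξ) := by
  have hzξ : star z ⬝ᵥ star ξ = star s - star σ := by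
    rw [star_dotProduct_star, hξz, star_sub]
  simp only [add_mul, mul_add, sub_mul, mul_sub, mul_one, Matrix.mul_smul, Matrix.smul_mul,
    vecMulVec_mul_vecMulVec, vecMulVec_smul, smul_smul, vecMulVec_sub, hz, hξz, hzξ, hξ]
  match_scalars <;> field_simp <;> ring

end

theorem Complex.star_dotProduct_self {ι : Type*} [Fintype ι] (z : ι → ℂ) :
    star z ⬝ᵥ z = ((∑ i, Complex.normSq (z i) : ℝ) : ℂ) := by
  simp [dotProduct, Complex.normSq_eq_conj_mul_self]

theorem stmt_12_general (n : ℕ) (s : ℂ) (z ξ : Fin n → ℂ) :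
    let sxz : ℂ := s - ∑ i, ξ i * z i
    let ψ₁r : ℝ := (∑ i, Complex.normSq (z i)) + 1
    let ψ₂r : ℝ := (∑ i, Complex.normSq (ξ i)) + Complex.normSq sxz
    let τr : ℝ := ψ₁r * ψ₂r
    let τ₀r : ℝ := Complex.normSq s
    let ψ₁ : ℂ := (ψ₁r : ℂ)
    let ψ₂ : ℂ := (ψ₂r : ℂ)
    let τ : ℂ := (τr : ℂ)
    let τ₀ : ℂ := (τ₀r : ℂ)
    let a11 : Matrix (Fin n) (Fin n) ℂ :=
      ψ₂ • 1 - sxz • Matrix.vecMulVec (star z) (star ξ)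
        - star sxz • Matrix.vecMulVec ξ z + ψ₁ • Matrix.vecMulVec ξ (star ξ)
    let a12 : Matrix (Fin n) (Fin n) ℂ :=
      ψ₁ • Matrix.vecMulVec ξ (star z) + Matrix.vecMulVec (star z) ξ
        - sxz • Matrix.vecMulVec (star z) (star z)
    let a21 : Matrix (Fin n) (Fin n) ℂ :=
      ψ₁ • Matrix.vecMulVec z (star ξ) + Matrix.vecMulVec (star ξ) z
        - star sxz • Matrix.vecMulVec z z
    let a22 : Matrix (Fin n) (Fin n) ℂ := ψ₁ • (1 + Matrix.vecMulVec z (star z))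
    let A' : Matrix (Fin n ⊕ Fin n) (Fin n ⊕ Fin n) ℂ := Matrix.fromBlocks a11 a12 a21 a22
    let b : Fin n ⊕ Fin n → ℂ :=
      Sum.elim (fun i => ψ₂ * star (z i) - ψ₁ * star sxz * ξ i)
               (fun i => ψ₁ * (star (ξ i) - star sxz * z i))
    let m : ℂ := ψ₁⁻¹ ^ 2 * (τ₀ - ψ₁ * ψ₂)
    IsUnit a22 ∧
      a22⁻¹ = ψ₁⁻¹ • ((1 : Matrix (Fin n) (Fin n) ℂ) - ψ₁⁻¹ • Matrix.vecMulVec z (star z)) ∧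
      a11 - a12 * a22⁻¹ * a21
        = ψ₂ • 1 + Matrix.vecMulVec ξ (fun j => star (ξ j) - star s * ψ₁⁻¹ * z j)
            + Matrix.vecMulVec (star z) (fun j => m * z j - s * ψ₁⁻¹ * star (ξ j)) := by
  intro sxz ψ₁r ψ₂r _ τ₀r ψ₁ ψ₂ _ τ₀ a11 a12 a21 a22 _ _ m
  have hψ₁ : ψ₁ ≠ 0 :=
    Complex.ofReal_ne_zero.mpr
      (add_pos_of_nonneg_of_pos (Finset.sum_nonneg fun i _ => Complex.normSq_nonneg _) one_pos).ne'
  have hz : star z ⬝ᵥ z = ψ₁ - 1 := by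
    simp [ψ₁, ψ₁r, Complex.star_dotProduct_self]
  have hξz : ξ ⬝ᵥ z = s - sxz := (sub_sub_cancel s _).symm
  have hξ : ξ ⬝ᵥ star ξ = ψ₂ - sxz * star sxz := by
    rw [dotProduct_comm, Complex.star_dotProduct_self]
    simp [ψ₂, ψ₂r, Complex.mul_conj]
  have hinv : a22 * (ψ₁⁻¹ • (1 - ψ₁⁻¹ • vecMulVec z (star z))) = 1 :=
    smul_one_add_vecMulVec_mul_eq_one z (star z) hψ₁ hz
  rw [inv_eq_right_inv hinv]
  refine ⟨IsUnit.of_mul_eq_one _ hinv, rfl, ?_⟩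
  have hτ₀ : τ₀ = s * star s := (Complex.mul_conj s).symm
  simp only [m, hτ₀]
  exact schurComplement_eq_of_dotProduct z ξ s sxz ψ₁ ψ₂ hψ₁ hz hξz hξ

theorem stmt_12 (n : ℕ) (hn : 1 ≤ n) (s : ℂ) (z ξ : Fin n → ℂ) :
    let sxz : ℂ := s - ∑ i, ξ i * z i
    let ψ₁r : ℝ := (∑ i, Complex.normSq (z i)) + 1
    let ψ₂r : ℝ := (∑ i, Complex.normSq (ξ i)) + Complex.normSq sxz
    let τr : ℝ := ψ₁r * ψ₂r
    let τ₀r : ℝ := Complex.normSq s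
    let ψ₁ : ℂ := (ψ₁r : ℂ)
    let ψ₂ : ℂ := (ψ₂r : ℂ)
    let τ : ℂ := (τr : ℂ)
    let τ₀ : ℂ := (τ₀r : ℂ)
    let a11 : Matrix (Fin n) (Fin n) ℂ :=
      ψ₂ • 1 - sxz • Matrix.vecMulVec (star z) (star ξ)
        - star sxz • Matrix.vecMulVec ξ z + ψ₁ • Matrix.vecMulVec ξ (star ξ)
    let a12 : Matrix (Fin n) (Fin n) ℂ :=
      ψ₁ • Matrix.vecMulVec ξ (star z) + Matrix.vecMulVec (star z) ξ
        - sxz • Matrix.vecMulVec (star z) (star z)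
    let a21 : Matrix (Fin n) (Fin n) ℂ :=
      ψ₁ • Matrix.vecMulVec z (star ξ) + Matrix.vecMulVec (star ξ) z
        - star sxz • Matrix.vecMulVec z z
    let a22 : Matrix (Fin n) (Fin n) ℂ := ψ₁ • (1 + Matrix.vecMulVec z (star z))
    let A' : Matrix (Fin n ⊕ Fin n) (Fin n ⊕ Fin n) ℂ := Matrix.fromBlocks a11 a12 a21 a22
    let b : Fin n ⊕ Fin n → ℂ :=
      Sum.elim (fun i => ψ₂ * star (z i) - ψ₁ * star sxz * ξ i)
               (fun i => ψ₁ * (star (ξ i) - star sxz * z i))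
    let m : ℂ := ψ₁⁻¹ ^ 2 * (τ₀ - ψ₁ * ψ₂)
    IsUnit a22 ∧
      a22⁻¹ = ψ₁⁻¹ • ((1 : Matrix (Fin n) (Fin n) ℂ) - ψ₁⁻¹ • Matrix.vecMulVec z (star z)) ∧
      a11 - a12 * a22⁻¹ * a21
        = ψ₂ • 1 + Matrix.vecMulVec ξ (fun j => star (ξ j) - star s * ψ₁⁻¹ * z j)
            + Matrix.vecMulVec (star z) (fun j => m * z j - s * ψ₁⁻¹ * star (ξ j)) :=
  stmt_12_general n s z ξ
end

section
/- b₂*·a₂₂⁻¹·b₂ = τ − τ₀ (as a scalar, i.e. the 1×1 matrix with this entry), where τ = ψ₁ψ₂ and τ₀ = |s|². -/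
/-!
Since ψ₁ = 1 + z*z, Sherman–Morrison gives a₂₂⁻¹ = ψ₁⁻¹ (1 − ψ₁⁻¹ z z*). Writing b₂ = ψ₁ w with
w = ξ* − conj(s_xz) z, the quadratic form becomes ψ₁ ‖w‖² − |z* w|², and z* w = conj s − conj(s_xz) ψ₁
because ξz = s − s_xz. Expanding, the cross terms cancel and ψ₁(‖ξ‖² + |s_xz|²) − |s|² remains.
-/

open Matrix

namespace Matrix

variable {K n : Type*} [Field K] [Fintype n] [DecidableEq n]

theorem one_add_vecMulVec_mul_one_sub {u v : n → K} (h : 1 + v ⬝ᵥ u ≠ 0) :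
    (1 + vecMulVec u v) * (1 - (1 + v ⬝ᵥ u)⁻¹ • vecMulVec u v) = 1 := by
  have hsplit : (1 + v ⬝ᵥ u)⁻¹ • vecMulVec u v + ((1 + v ⬝ᵥ u)⁻¹ * v ⬝ᵥ u) • vecMulVec u v =
      vecMulVec u v := by
    rw [← add_smul, ← mul_one_add, inv_mul_cancel₀ h, one_smul]
  rw [add_mul, mul_sub, mul_sub, mul_smul_comm, mul_smul_comm, vecMulVec_mul_vecMulVec,
    vecMulVec_smul, smul_smul, one_mul, mul_one, one_mul]
  linear_combination (norm := module) -hsplit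

theorem dotProduct_inv_smul_one_add_vecMulVec_mulVec {c : K} (hc : c ≠ 0) {u v : n → K}
    (h : 1 + v ⬝ᵥ u ≠ 0) (x y : n → K) :
    x ⬝ᵥ ((c • (1 + vecMulVec u v))⁻¹ *ᵥ y) =
      c⁻¹ * (x ⬝ᵥ y - (1 + v ⬝ᵥ u)⁻¹ * (x ⬝ᵥ u) * (v ⬝ᵥ y)) := by
  have hinv : (c • (1 + vecMulVec u v))⁻¹ = c⁻¹ • (1 - (1 + v ⬝ᵥ u)⁻¹ • vecMulVec u v) :=
    inv_eq_right_inv <| by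
      rw [smul_mul_smul_comm, mul_inv_cancel₀ hc, one_add_vecMulVec_mul_one_sub h, one_smul]
  rw [hinv, smul_mulVec, sub_mulVec, one_mulVec, smul_mulVec, vecMulVec_mulVec]
  simp only [dotProduct_smul, dotProduct_sub, smul_eq_mul, MulOpposite.smul_eq_mul_unop,
    MulOpposite.unop_op]
  ring

end Matrix

theorem Complex.ofReal_sum_normSq {n : Type*} [Fintype n] (v : n → ℂ) :
    ((∑ i, Complex.normSq (v i) : ℝ) : ℂ) = star v ⬝ᵥ v := by
  push_cast
  simp [dotProduct, Complex.normSq_eq_conj_mul_self]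

theorem stmt_14_general (n : ℕ) (s : ℂ) (z ξ : Fin n → ℂ) :
    let sxz : ℂ := s - ∑ i, ξ i * z i
    let ψ₁r : ℝ := (∑ i, Complex.normSq (z i)) + 1
    let ψ₂r : ℝ := (∑ i, Complex.normSq (ξ i)) + Complex.normSq sxz
    let τr : ℝ := ψ₁r * ψ₂r
    let τ₀r : ℝ := Complex.normSq s
    let ψ₁ : ℂ := (ψ₁r : ℂ)
    let ψ₂ : ℂ := (ψ₂r : ℂ)
    let τ : ℂ := (τr : ℂ)
    let τ₀ : ℂ := (τ₀r : ℂ)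
    let a11 : Matrix (Fin n) (Fin n) ℂ :=
      ψ₂ • 1 - sxz • Matrix.vecMulVec (star z) (star ξ)
        - star sxz • Matrix.vecMulVec ξ z + ψ₁ • Matrix.vecMulVec ξ (star ξ)
    let a12 : Matrix (Fin n) (Fin n) ℂ :=
      ψ₁ • Matrix.vecMulVec ξ (star z) + Matrix.vecMulVec (star z) ξ
        - sxz • Matrix.vecMulVec (star z) (star z)
    let a21 : Matrix (Fin n) (Fin n) ℂ :=
      ψ₁ • Matrix.vecMulVec z (star ξ) + Matrix.vecMulVec (star ξ) z
        - star sxz • Matrix.vecMulVec z z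
    let a22 : Matrix (Fin n) (Fin n) ℂ := ψ₁ • (1 + Matrix.vecMulVec z (star z))
    let A' : Matrix (Fin n ⊕ Fin n) (Fin n ⊕ Fin n) ℂ := Matrix.fromBlocks a11 a12 a21 a22
    let b : Fin n ⊕ Fin n → ℂ :=
      Sum.elim (fun i => ψ₂ * star (z i) - ψ₁ * star sxz * ξ i)
               (fun i => ψ₁ * (star (ξ i) - star sxz * z i))
    let b2 : Fin n → ℂ := fun i => ψ₁ * (star (ξ i) - star sxz * z i)
    star b2 ⬝ᵥ (a22⁻¹ *ᵥ b2) = τ - τ₀ := by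
  intro sxz ψ₁r ψ₂r τr τ₀r ψ₁ ψ₂ τ τ₀ _ _ _ a22 _ _ b2
  set w : Fin n → ℂ := star ξ - star sxz • z
  have hb2 : b2 = ψ₁ • w := rfl
  have hψ₁ : ψ₁ = 1 + star z ⬝ᵥ z := by
    simp only [ψ₁, ψ₁r, Complex.ofReal_add, Complex.ofReal_sum_normSq, Complex.ofReal_one,
      add_comm]
  have hψ₁0 : ψ₁ ≠ 0 := Complex.ofReal_ne_zero.mpr
    (add_pos_of_nonneg_of_pos (Finset.sum_nonneg fun i _ => Complex.normSq_nonneg (z i)) one_pos).ne'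
  have hτ : τ = ψ₁ * (star ξ ⬝ᵥ ξ + star sxz * sxz) := by
    simp only [τ, τr, ψ₂r, Complex.ofReal_mul, Complex.ofReal_add, Complex.ofReal_sum_normSq,
      Complex.normSq_eq_conj_mul_self]
    rfl
  have hτ₀ : τ₀ = star s * s := Complex.normSq_eq_conj_mul_self
  have hquad : star b2 ⬝ᵥ (a22⁻¹ *ᵥ b2) = ψ₁ * (star w ⬝ᵥ w) - (star w ⬝ᵥ z) * (star z ⬝ᵥ w) := by
    rw [hb2, star_smul, Complex.star_def, Complex.conj_ofReal, smul_dotProduct, mulVec_smul,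
      dotProduct_smul, dotProduct_inv_smul_one_add_vecMulVec_mulVec hψ₁0 (hψ₁ ▸ hψ₁0), ← hψ₁]
    simp only [smul_eq_mul]
    field_simp
    ring
  have hξz : ξ ⬝ᵥ z = s - sxz := (sub_sub_cancel s _).symm
  have hzξ : star z ⬝ᵥ star ξ = star s - star sxz := by
    rw [star_dotProduct_star, hξz, star_sub]
  rw [hquad, hτ, hτ₀, hψ₁]
  simp only [w, star_sub, star_smul, star_star, dotProduct_sub, sub_dotProduct, smul_dotProduct,
    dotProduct_smul, smul_eq_mul, hξz, hzξ, dotProduct_comm ξ (star ξ)]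
  ring

theorem stmt_14 (n : ℕ) (hn : 1 ≤ n) (s : ℂ) (z ξ : Fin n → ℂ) :
    let sxz : ℂ := s - ∑ i, ξ i * z i
    let ψ₁r : ℝ := (∑ i, Complex.normSq (z i)) + 1
    let ψ₂r : ℝ := (∑ i, Complex.normSq (ξ i)) + Complex.normSq sxz
    let τr : ℝ := ψ₁r * ψ₂r
    let τ₀r : ℝ := Complex.normSq s
    let ψ₁ : ℂ := (ψ₁r : ℂ)
    let ψ₂ : ℂ := (ψ₂r : ℂ)
    let τ : ℂ := (τr : ℂ)
    let τ₀ : ℂ := (τ₀r : ℂ)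
    let a11 : Matrix (Fin n) (Fin n) ℂ :=
      ψ₂ • 1 - sxz • Matrix.vecMulVec (star z) (star ξ)
        - star sxz • Matrix.vecMulVec ξ z + ψ₁ • Matrix.vecMulVec ξ (star ξ)
    let a12 : Matrix (Fin n) (Fin n) ℂ :=
      ψ₁ • Matrix.vecMulVec ξ (star z) + Matrix.vecMulVec (star z) ξ
        - sxz • Matrix.vecMulVec (star z) (star z)
    let a21 : Matrix (Fin n) (Fin n) ℂ :=
      ψ₁ • Matrix.vecMulVec z (star ξ) + Matrix.vecMulVec (star ξ) z
        - star sxz • Matrix.vecMulVec z z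
    let a22 : Matrix (Fin n) (Fin n) ℂ := ψ₁ • (1 + Matrix.vecMulVec z (star z))
    let A' : Matrix (Fin n ⊕ Fin n) (Fin n ⊕ Fin n) ℂ := Matrix.fromBlocks a11 a12 a21 a22
    let b : Fin n ⊕ Fin n → ℂ :=
      Sum.elim (fun i => ψ₂ * star (z i) - ψ₁ * star sxz * ξ i)
               (fun i => ψ₁ * (star (ξ i) - star sxz * z i))
    let b2 : Fin n → ℂ := fun i => ψ₁ * (star (ξ i) - star sxz * z i)
    star b2 ⬝ᵥ (a22⁻¹ *ᵥ b2) = τ - τ₀ :=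
  stmt_14_general n s z ξ
end
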